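/- arXiv:physics/9904035 — 7 statements merged into one kernel-verified Lean document; each statement's English description precedes it below -/
import Mathlib

section
/- Let Q be a real symmetric n×n matrix with det Q ≠ 0, and let D be a real n×n positive definite matrix (xᵀDx > 0 for every nonzero x ∈ ℝⁿ). Then every complex number μ satisfying det(Q − μ·D) = 0 (determinant taken over ℂ, viewing Q and D as complex matrices) has nonzero real part; in particular no root of det(Q − μ·D) is purely imaginary or zero. -/
open Matrix

/-- If `Q` is real symmetric with `det Q ≠ 0` and `D` is real positive definite
(`xᵀ D x > 0` for all nonzero `x`; symmetry not assumed), then every complex `μ` with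
`det (Q - μ • D) = 0` (over `ℂ`) has nonzero real part. -/
theorem re_ne_zero_of_det_sub_smul_posDef_eq_zero
    (n : ℕ) (Q D : Matrix (Fin n) (Fin n) ℝ)
    (hQsymm : Q.IsSymm) (hQdet : Q.det ≠ 0)
    (hD : ∀ x : Fin n → ℝ, x ≠ 0 → 0 < x ⬝ᵥ D.mulVec x) :
    ∀ μ : ℂ, (Q.map (fun a => (a : ℂ)) - μ • D.map (fun a => (a : ℂ))).det = 0 → μ.re ≠ 0 := by
  intro μ hdet hre0
  set η := μ.im with hη
  have hμ : μ = (η : ℂ) * Complex.I := by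
    apply Complex.ext <;> simp [hre0, hη]
  obtain ⟨v, hv0, hv⟩ := (Matrix.exists_mulVec_eq_zero_iff).mpr hdet
  set a : Fin n → ℝ := fun i => (v i).re with ha
  set b : Fin n → ℝ := fun i => (v i).im with hb
  have key1 : ∀ i, Q.mulVec a i + η * D.mulVec b i = 0 := by
    intro i
    have h := congrFun hv i
    rw [Matrix.sub_mulVec, Matrix.smul_mulVec] at h
    have h' := congrArg Complex.re h
    simp [Matrix.mulVec, dotProduct, Matrix.map_apply, hμ, Complex.mul_re,
      Complex.re_sum, Complex.im_sum, Finset.mul_sum] at h'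
    simpa [Matrix.mulVec, dotProduct, Finset.mul_sum, sub_eq_iff_eq_add',
      mul_comm, mul_left_comm] using h'
  have key2 : ∀ i, Q.mulVec b i - η * D.mulVec a i = 0 := by
    intro i
    have h := congrFun hv i
    rw [Matrix.sub_mulVec, Matrix.smul_mulVec] at h
    have h' := congrArg Complex.im h
    simp [Matrix.mulVec, dotProduct, Matrix.map_apply, hμ, Complex.mul_re,
      Complex.mul_im, Complex.re_sum, Complex.im_sum, Finset.mul_sum] at h'
    simpa [Matrix.mulVec, dotProduct, Finset.mul_sum, sub_eq_iff_eq_add',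
      mul_comm, mul_left_comm] using h'
  -- dot products
  have e1 : b ⬝ᵥ Q.mulVec a + η * (b ⬝ᵥ D.mulVec b) = 0 := by
    have : ∀ i, b i * Q.mulVec a i + η * (b i * D.mulVec b i) = 0 := by
      intro i
      linear_combination b i * key1 i
    simp only [dotProduct, Finset.mul_sum, ← Finset.sum_add_distrib]
    simpa using Finset.sum_congr rfl (fun i _ => this i) |>.trans (by simp)
  have e2 : a ⬝ᵥ Q.mulVec b - η * (a ⬝ᵥ D.mulVec a) = 0 := by
    have : ∀ i, a i * Q.mulVec b i - η * (a i * D.mulVec a i) = 0 := by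
      intro i; linear_combination a i * key2 i
    simp only [dotProduct, Finset.mul_sum, ← Finset.sum_sub_distrib]
    simpa using Finset.sum_congr rfl (fun i _ => this i) |>.trans (by simp)
  have hsymm : a ⬝ᵥ Q.mulVec b = b ⬝ᵥ Q.mulVec a := by
    rw [Matrix.dotProduct_mulVec, ← Matrix.mulVec_transpose, hQsymm.eq, dotProduct_comm]
  have hzero : η * (a ⬝ᵥ D.mulVec a + b ⬝ᵥ D.mulVec b) = 0 := by
    rw [hsymm] at e2; nlinarith [e1, e2]
  by_cases hη0 : η = 0
  · -- μ = 0, so det Q = 0 over ℂ, contradiction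
    rw [hη0] at hμ
    simp only [hμ, Complex.ofReal_zero, zero_mul, zero_smul, sub_zero] at hdet
    have : (Complex.ofRealHom : ℝ →+* ℂ) Q.det = 0 := by
      rw [RingHom.map_det]; exact hdet
    exact hQdet (by simpa using this)
  · have hsum : a ⬝ᵥ D.mulVec a + b ⬝ᵥ D.mulVec b = 0 := by
      rcases mul_eq_zero.mp hzero with h | h
      · exact absurd h hη0
      · exact h
    have hab : a ≠ 0 ∨ b ≠ 0 := by
      by_contra h
      push_neg at h
      obtain ⟨h1, h2⟩ := h
      apply hv0
      funext i
      have ha' : (v i).re = 0 := congrFun h1 i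
      have hb' : (v i).im = 0 := congrFun h2 i
      exact Complex.ext ha' hb'
    have nna : 0 ≤ a ⬝ᵥ D.mulVec a := by
      by_cases h : a = 0
      · simp [h]
      · exact (hD a h).le
    have nnb : 0 ≤ b ⬝ᵥ D.mulVec b := by
      by_cases h : b = 0
      · simp [h]
      · exact (hD b h).le
    rcases hab with h | h
    · have := hD a h; nlinarith
    · have := hD b h; nlinarith
end

section
/- Let f : ℝⁿ → ℝⁿ and h, g : ℝⁿ → ℝ be twice continuously differentiable and satisfy the entropy compatibility condition: for all u ∈ ℝⁿ, (∇h(u))ᵀ · Df(u) = (∇g(u))ᵀ, i.e. ∑ᵢ (∂h/∂uᵢ)(∂fᵢ/∂uⱼ) = ∂g/∂uⱼ for each j. Then for every u ∈ ℝⁿ the n×n matrix Hess h(u) · Df(u) (the Hessian matrix of h at u multiplied by the Jacobian matrix of f at u) is symmetric. -/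
open Matrix

/-- Symmetrization: if `(∇h)ᵀ Df = (∇g)ᵀ` (entropy compatibility) with `f, h, g` of class
`C²`, then the matrix `Hess h(u) · Df(u)` is symmetric for every `u`, where
`(Hess h(u))ᵢⱼ = ∂²h/∂uᵢ∂uⱼ` and `(Df(u))ᵢⱼ = ∂fᵢ/∂uⱼ`. -/
theorem hessian_mul_jacobian_isSymm
    (n : ℕ) (f : (Fin n → ℝ) → (Fin n → ℝ)) (h g : (Fin n → ℝ) → ℝ)
    (hf : ContDiff ℝ 2 f) (hh : ContDiff ℝ 2 h) (hg : ContDiff ℝ 2 g)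
    (hcompat : ∀ y : Fin n → ℝ, fderiv ℝ g y = (fderiv ℝ h y).comp (fderiv ℝ f y)) :
    ∀ u : Fin n → ℝ,
      ((Matrix.of fun i j : Fin n =>
          fderiv ℝ (fun y => fderiv ℝ h y (Pi.single j 1)) u (Pi.single i 1)) *
        (Matrix.of fun i j : Fin n =>
          fderiv ℝ f u (Pi.single j 1) i)).IsSymm := by
  intro u
  have hhd : DifferentiableAt ℝ (fderiv ℝ h) u :=
    ((hh.fderiv_right (m := 1) one_add_one_eq_two.le).differentiable one_ne_zero) u
  have hfd : DifferentiableAt ℝ (fderiv ℝ f) u :=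
    ((hf.fderiv_right (m := 1) one_add_one_eq_two.le).differentiable one_ne_zero) u
  have hB : fderiv ℝ (fderiv ℝ g) u
      = fderiv ℝ (fun y => (fderiv ℝ h y).comp (fderiv ℝ f y)) u := by
    congr 1; funext y; exact hcompat y
  rw [fderiv_clm_comp hhd hfd] at hB
  have eval : ∀ v w : Fin n → ℝ, fderiv ℝ (fderiv ℝ g) u v w
      = fderiv ℝ h u (fderiv ℝ (fderiv ℝ f) u v w)
        + fderiv ℝ (fderiv ℝ h) u v (fderiv ℝ f u w) := by
    intro v w
    rw [hB]
    simp
  have key : ∀ v w : Fin n → ℝ,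
      fderiv ℝ (fderiv ℝ h) u v (fderiv ℝ f u w)
        = fderiv ℝ (fderiv ℝ h) u w (fderiv ℝ f u v) := by
    intro v w
    have symg : fderiv ℝ (fderiv ℝ g) u v w = fderiv ℝ (fderiv ℝ g) u w v :=
      (hg.contDiffAt.isSymmSndFDerivAt (by norm_num)) v w
    have symf : fderiv ℝ (fderiv ℝ f) u v w = fderiv ℝ (fderiv ℝ f) u w v :=
      (hf.contDiffAt.isSymmSndFDerivAt (by norm_num)) v w
    have e1 := eval v w
    have e2 := eval w v
    rw [symg, symf] at e1
    linarith [e1, e2]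
  have lin : ∀ (L : (Fin n → ℝ) →L[ℝ] ℝ) (v : Fin n → ℝ),
      L v = ∑ k, v k * L (Pi.single k 1) := by
    intro L v
    have hv : v = ∑ k, v k • (Pi.single k 1 : Fin n → ℝ) := by
      funext i
      simp [Finset.sum_apply, Pi.single_apply]
    conv_lhs => rw [hv]
    simp [smul_eq_mul]
  have hentry : ∀ k : Fin n, ∀ v : Fin n → ℝ,
      fderiv ℝ (fun y => fderiv ℝ h y (Pi.single k 1)) u v
        = fderiv ℝ (fderiv ℝ h) u v (Pi.single k 1) := by
    intro k v
    rw [fderiv_clm_apply hhd (differentiableAt_const _)]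
    simp
  rw [Matrix.IsSymm]
  ext i j
  rw [Matrix.transpose_apply, Matrix.mul_apply, Matrix.mul_apply]
  simp only [Matrix.of_apply]
  calc ∑ k, fderiv ℝ (fun y => fderiv ℝ h y (Pi.single k 1)) u (Pi.single j 1)
        * fderiv ℝ f u (Pi.single i 1) k
      = ∑ k, fderiv ℝ f u (Pi.single i 1) k
        * fderiv ℝ (fderiv ℝ h) u (Pi.single j 1) (Pi.single k 1) := by
        refine Finset.sum_congr rfl fun k _ => ?_
        rw [hentry, mul_comm]
    _ = fderiv ℝ (fderiv ℝ h) u (Pi.single j 1) (fderiv ℝ f u (Pi.single i 1)) :=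
        (lin _ _).symm
    _ = fderiv ℝ (fderiv ℝ h) u (Pi.single i 1) (fderiv ℝ f u (Pi.single j 1)) :=
        key _ _
    _ = ∑ k, fderiv ℝ f u (Pi.single j 1) k
        * fderiv ℝ (fderiv ℝ h) u (Pi.single i 1) (Pi.single k 1) := lin _ _
    _ = ∑ k, fderiv ℝ (fun y => fderiv ℝ h y (Pi.single k 1)) u (Pi.single i 1)
        * fderiv ℝ f u (Pi.single j 1) k := by
        refine Finset.sum_congr rfl fun k _ => ?_
        rw [hentry, mul_comm]
end

section
/- Let f : ℝⁿ → ℝⁿ and h, g : ℝⁿ → ℝ be twice continuously differentiable and satisfy the entropy compatibility condition: for all u ∈ ℝⁿ, (∇h(u))ᵀ · Df(u) = (∇g(u))ᵀ. Define g′ : ℝⁿ → ℝ by g′(u) = g(u) − ⟨∇h(u), f(u)⟩. Then for every u ∈ ℝⁿ, ∇g′(u) = − Hess h(u) · f(u). -/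
/-- If `(∇h)ᵀ Df = (∇g)ᵀ` (entropy compatibility) with `f, h, g` of class `C²`, and
`g′(u) = g(u) - ⟨∇h(u), f(u)⟩` (here `⟨∇h(u), v⟩ = (fderiv ℝ h u) v`), then
`∇g′(u) = - Hess h(u) · f(u)`, i.e. for every direction `v`,
`(fderiv g′ u) v = - (D(∇h)(u) v) (f u)`. -/
theorem grad_of_transformed_entropy_flux
    (n : ℕ) (f : (Fin n → ℝ) → (Fin n → ℝ)) (h g : (Fin n → ℝ) → ℝ)
    (hf : ContDiff ℝ 2 f) (hh : ContDiff ℝ 2 h) (hg : ContDiff ℝ 2 g)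
    (hcompat : ∀ y : Fin n → ℝ, fderiv ℝ g y = (fderiv ℝ h y).comp (fderiv ℝ f y)) :
    ∀ (u v : Fin n → ℝ),
      fderiv ℝ (fun y => g y - fderiv ℝ h y (f y)) u v
        = - (fderiv ℝ (fun y => fderiv ℝ h y) u v) (f u) := by
  intro u v
  have hh' : ContDiff ℝ 1 (fun y => fderiv ℝ h y) := hh.fderiv_right (by norm_num)
  have hc : HasFDerivAt (fun y => fderiv ℝ h y)
      (fderiv ℝ (fun y => fderiv ℝ h y) u) u :=
    (hh'.differentiable (by norm_num) u).hasFDerivAt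
  have hfd : HasFDerivAt f (fderiv ℝ f u) u :=
    ((hf.differentiable (by norm_num)) u).hasFDerivAt
  have happ : HasFDerivAt (fun y => fderiv ℝ h y (f y))
      ((fderiv ℝ h u).comp (fderiv ℝ f u)
        + (fderiv ℝ (fun y => fderiv ℝ h y) u).flip (f u)) u :=
    hc.clm_apply hfd
  have hgd : HasFDerivAt g (fderiv ℝ g u) u :=
    ((hg.differentiable (by norm_num)) u).hasFDerivAt
  have htot : fderiv ℝ (fun y => g y - fderiv ℝ h y (f y)) u = _ := (hgd.sub happ).fderiv
  rw [htot]
  simp [hcompat u]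
end

section
/- Let f : ℝⁿ → ℝⁿ and h, g : ℝⁿ → ℝ satisfy the entropy compatibility condition (∇h(u))ᵀ·Df(u) = (∇g(u))ᵀ for all u, with h twice continuously differentiable and f, g continuously differentiable. Let D : ℝⁿ → M_n(ℝ) be a continuous matrix-valued map, let u : ℝ × ℝ → ℝⁿ be twice continuously differentiable, set w(x,t) = −∇h(u(x,t)), and suppose u solves the dissipative system ∂u/∂t + ∂/∂x[f(u)] = ∂/∂x[ D(w) · ∂w/∂x ] at every point. Then at every point ∂/∂t[h(u)] + ∂/∂x[g(u)] = − wᵀ · ∂/∂x[ D(w) · ∂w/∂x ]. -/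
open Matrix

/-- Pointwise entropy evolution with dissipation: if `(∇h)ᵀ Df = (∇g)ᵀ`, `u(x,t)` is `C²`,
`w = -∇h(u)`, and `∂u/∂t + ∂/∂x[f(u)] = ∂/∂x[D(w)·∂w/∂x]` pointwise, then
`∂/∂t[h(u)] + ∂/∂x[g(u)] = - wᵀ · ∂/∂x[D(w)·∂w/∂x]` pointwise. -/
theorem dissipative_entropy_evolution
    (n : ℕ) (f : (Fin n → ℝ) → (Fin n → ℝ)) (h g : (Fin n → ℝ) → ℝ)
    (hf : ContDiff ℝ 1 f) (hh : ContDiff ℝ 2 h) (hg : ContDiff ℝ 1 g)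
    (hcompat : ∀ y : Fin n → ℝ, fderiv ℝ g y = (fderiv ℝ h y).comp (fderiv ℝ f y))
    (D : (Fin n → ℝ) → Matrix (Fin n) (Fin n) ℝ) (hD : Continuous D)
    (u : ℝ × ℝ → (Fin n → ℝ)) (hu : ContDiff ℝ 2 u)
    (w : ℝ × ℝ → (Fin n → ℝ))
    (hw : w = fun p => fun i => -(fderiv ℝ h (u p) (Pi.single i 1)))
    (hpde : ∀ p : ℝ × ℝ,
      fderiv ℝ u p ((0 : ℝ), (1 : ℝ)) + fderiv ℝ (fun q => f (u q)) p ((1 : ℝ), (0 : ℝ))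
        = fderiv ℝ (fun q => (D (w q)).mulVec (fderiv ℝ w q ((1 : ℝ), (0 : ℝ))))
            p ((1 : ℝ), (0 : ℝ))) :
    ∀ p : ℝ × ℝ,
      fderiv ℝ (fun q => h (u q)) p ((0 : ℝ), (1 : ℝ))
        + fderiv ℝ (fun q => g (u q)) p ((1 : ℝ), (0 : ℝ))
      = - (w p) ⬝ᵥ
          (fderiv ℝ (fun q => (D (w q)).mulVec (fderiv ℝ w q ((1 : ℝ), (0 : ℝ))))
            p ((1 : ℝ), (0 : ℝ))) := by
  intro p
  have hud : Differentiable ℝ u := hu.differentiable two_ne_zero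
  have hhd : Differentiable ℝ h := hh.differentiable two_ne_zero
  have hgd : Differentiable ℝ g := hg.differentiable one_ne_zero
  have hfd : Differentiable ℝ f := hf.differentiable one_ne_zero
  set L := fderiv ℝ h (u p) with hL
  set A := fderiv ℝ u p with hA
  have hchain_h : fderiv ℝ (fun q => h (u q)) p = L.comp A :=
    fderiv_comp p (hhd (u p)) (hud p)
  have hchain_g : fderiv ℝ (fun q => g (u q)) p = (fderiv ℝ g (u p)).comp A :=
    fderiv_comp p (hgd (u p)) (hud p)
  have hchain_f : fderiv ℝ (fun q => f (u q)) p = (fderiv ℝ f (u p)).comp A :=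
    fderiv_comp p (hfd (u p)) (hud p)
  set v := fderiv ℝ (fun q => (D (w q)).mulVec (fderiv ℝ w q ((1:ℝ), (0:ℝ)))) p
      ((1:ℝ), (0:ℝ)) with hv
  have key : ∀ z : Fin n → ℝ, L z = - (w p) ⬝ᵥ z := by
    intro z
    have hz : z = ∑ i, z i • (Pi.single i 1 : Fin n → ℝ) := by
      ext j; simp [Pi.single_apply, Finset.sum_apply]
    calc L z = L (∑ i, z i • (Pi.single i 1 : Fin n → ℝ)) := by rw [← hz]
      _ = ∑ i, z i * L (Pi.single i 1) := by
          rw [map_sum]; simp [_root_.map_smul, smul_eq_mul]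
      _ = - (w p) ⬝ᵥ z := by
          subst hw
          simp [dotProduct, mul_comm, hL]
  have hLhs : L (A ((0:ℝ),(1:ℝ))) + L (fderiv ℝ f (u p) (A ((1:ℝ),(0:ℝ)))) = L v := by
    rw [← map_add]
    congr 1
    have := hpde p
    rw [hchain_f] at this
    exact this
  calc fderiv ℝ (fun q => h (u q)) p ((0:ℝ),(1:ℝ))
        + fderiv ℝ (fun q => g (u q)) p ((1:ℝ),(0:ℝ))
      = L (A ((0:ℝ),(1:ℝ))) + L (fderiv ℝ f (u p) (A ((1:ℝ),(0:ℝ)))) := by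
        rw [hchain_h, hchain_g, hcompat (u p)]; rfl
    _ = L v := hLhs
    _ = - (w p) ⬝ᵥ v := key v
end

section
/- Under the hypotheses of the dissipative entropy evolution identity — f : ℝⁿ → ℝⁿ, h, g : ℝⁿ → ℝ with (∇h(u))ᵀ·Df(u) = (∇g(u))ᵀ for all u, h twice continuously differentiable, D : ℝⁿ → M_n(ℝ) continuous, u : ℝ × ℝ → ℝⁿ twice continuously differentiable solving ∂u/∂t + ∂/∂x[f(u)] = ∂/∂x[D(w)·∂w/∂x] with w = −∇h(u) — one has, for every fixed interval [a,b] and every t: d/dt ∫ₐᵇ h(u(x,t)) dx + [ g(u) + wᵀ·D(w)·∂w/∂x ]ₓ₌ₐ^{x=b} = ∫ₐᵇ (∂w/∂x)ᵀ · D(w) · (∂w/∂x) dx. -/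
open Matrix MeasureTheory

private lemma clm_pi_apply {n : ℕ} (L : (Fin n → ℝ) →L[ℝ] ℝ) (v : Fin n → ℝ) :
    L v = ∑ i, v i * L (Pi.single i 1) := by
  have hv : v = ∑ i, v i • (Pi.single i (1 : ℝ) : Fin n → ℝ) := by
    ext j
    simp [Pi.single_apply]
  conv_lhs => rw [hv]
  rw [map_sum]
  simp [smul_eq_mul]

/-- Integrated entropy balance: under the hypotheses of the dissipative entropy evolution
identity, for every interval `[a,b]` and every `t`,
`d/dt ∫ₐᵇ h(u) dx + [g(u) + wᵀ D(w) ∂w/∂x]ₐᵇ = ∫ₐᵇ (∂w/∂x)ᵀ D(w) (∂w/∂x) dx`. -/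
theorem integrated_entropy_balance
    (n : ℕ) (f : (Fin n → ℝ) → (Fin n → ℝ)) (h g : (Fin n → ℝ) → ℝ)
    (hf : ContDiff ℝ 1 f) (hh : ContDiff ℝ 2 h) (hg : ContDiff ℝ 1 g)
    (hcompat : ∀ y : Fin n → ℝ, fderiv ℝ g y = (fderiv ℝ h y).comp (fderiv ℝ f y))
    (D : (Fin n → ℝ) → Matrix (Fin n) (Fin n) ℝ) (hD : Continuous D)
    (u : ℝ × ℝ → (Fin n → ℝ)) (hu : ContDiff ℝ 2 u)
    (w : ℝ × ℝ → (Fin n → ℝ))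
    (hw : w = fun p => fun i => -(fderiv ℝ h (u p) (Pi.single i 1)))
    (hdiff : Differentiable ℝ
      (fun q => (D (w q)).mulVec (fderiv ℝ w q ((1 : ℝ), (0 : ℝ)))))
    (hpde : ∀ p : ℝ × ℝ,
      fderiv ℝ u p ((0 : ℝ), (1 : ℝ)) + fderiv ℝ (fun q => f (u q)) p ((1 : ℝ), (0 : ℝ))
        = fderiv ℝ (fun q => (D (w q)).mulVec (fderiv ℝ w q ((1 : ℝ), (0 : ℝ))))
            p ((1 : ℝ), (0 : ℝ))) :
    ∀ (a b : ℝ), a ≤ b → ∀ t : ℝ,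
      deriv (fun s => ∫ x in a..b, h (u (x, s))) t
        + ((g (u (b, t)) + (w (b, t)) ⬝ᵥ
              (D (w (b, t))).mulVec (fderiv ℝ w (b, t) ((1 : ℝ), (0 : ℝ))))
          - (g (u (a, t)) + (w (a, t)) ⬝ᵥ
              (D (w (a, t))).mulVec (fderiv ℝ w (a, t) ((1 : ℝ), (0 : ℝ)))))
      = ∫ x in a..b,
          (fderiv ℝ w (x, t) ((1 : ℝ), (0 : ℝ))) ⬝ᵥ
            (D (w (x, t))).mulVec (fderiv ℝ w (x, t) ((1 : ℝ), (0 : ℝ))) := by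
  intro a b hab t
  have hu1 : ContDiff ℝ 1 u := hu.of_le one_le_two
  have hud : Differentiable ℝ u := hu1.differentiable one_ne_zero
  have hh1 : ContDiff ℝ 1 h := hh.of_le one_le_two
  have hhd : Differentiable ℝ h := hh1.differentiable one_ne_zero
  have hfd : Differentiable ℝ f := hf.differentiable one_ne_zero
  have hgd : Differentiable ℝ g := hg.differentiable one_ne_zero
  -- `w` is C¹
  have hw1 : ContDiff ℝ 1 w := by
    rw [hw]
    refine contDiff_pi.mpr fun i => ?_
    exact (((hh.fderiv_right (by norm_num)).comp hu1).clm_apply contDiff_const).neg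
  have hwd : Differentiable ℝ w := hw1.differentiable one_ne_zero
  have hfw_cont : Continuous (fderiv ℝ w) := hw1.continuous_fderiv one_ne_zero
  have hhu : ContDiff ℝ 2 (fun p => h (u p)) := hh.comp hu
  have hgu : ContDiff ℝ 1 (fun p => g (u p)) := hg.comp hu1
  set m : ℝ × ℝ → (Fin n → ℝ) :=
    fun q => (D (w q)).mulVec (fderiv ℝ w q ((1 : ℝ), (0 : ℝ))) with hm
  -- key linear identity: `∇h(u p) · v = -(w p ⬝ᵥ v)`
  have hL : ∀ (p : ℝ × ℝ) (v : Fin n → ℝ), fderiv ℝ h (u p) v = -(w p ⬝ᵥ v) := by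
    intro p v
    rw [clm_pi_apply]
    simp only [hw, dotProduct, neg_mul, Finset.sum_neg_distrib, neg_neg]
    exact Finset.sum_congr rfl fun i _ => mul_comm _ _
  -- continuity facts
  have hW_cont : Continuous (fun p : ℝ × ℝ => fderiv ℝ w p ((1 : ℝ), (0 : ℝ))) :=
    hfw_cont.clm_apply continuous_const
  have hm_cont : Continuous m := hdiff.continuous
  have hE_cont : Continuous (fun p : ℝ × ℝ => fderiv ℝ w p ((1 : ℝ), (0 : ℝ)) ⬝ᵥ m p) :=
    hW_cont.dotProduct hm_cont
  have hphi_cont : Continuous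
      (fun p : ℝ × ℝ => fderiv ℝ (fun q => h (u q)) p ((0 : ℝ), (1 : ℝ))) :=
    (hhu.continuous_fderiv two_ne_zero).clm_apply continuous_const
  have hline : Continuous (fun x : ℝ => ((x : ℝ), t)) :=
    continuous_id.prodMk continuous_const
  -- derivative along horizontal lines
  have hc : ∀ x : ℝ, HasDerivAt (fun x : ℝ => ((x : ℝ), t)) ((1 : ℝ), (0 : ℝ)) x :=
    fun x => (hasDerivAt_id x).prodMk (hasDerivAt_const x t)
  have comp1 : ∀ (E' : Type) (_ : NormedAddCommGroup E') (_ : NormedSpace ℝ E'), True :=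
    fun _ _ _ => trivial
  have hWx : ∀ x : ℝ, HasDerivAt (fun x => w (x, t))
      (fderiv ℝ w (x, t) ((1 : ℝ), (0 : ℝ))) x :=
    fun x => (hwd (x, t)).hasFDerivAt.comp_hasDerivAt x (hc x)
  have hmx : ∀ x : ℝ, HasDerivAt (fun x => m (x, t))
      (fderiv ℝ m (x, t) ((1 : ℝ), (0 : ℝ))) x :=
    fun x => by have := (hdiff (x, t)).hasFDerivAt.comp_hasDerivAt x (hc x); exact this
  have hgux : ∀ x : ℝ, HasDerivAt (fun x => g (u (x, t)))
      (fderiv ℝ (fun q => g (u q)) (x, t) ((1 : ℝ), (0 : ℝ))) x :=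
    fun x => by have := (hgu.differentiable one_ne_zero (x, t)).hasFDerivAt.comp_hasDerivAt x (hc x); exact this
  -- derivative of the dot-product term
  have hdot : ∀ x : ℝ, HasDerivAt (fun x => w (x, t) ⬝ᵥ m (x, t))
      (fderiv ℝ w (x, t) ((1 : ℝ), (0 : ℝ)) ⬝ᵥ m (x, t)
        + w (x, t) ⬝ᵥ fderiv ℝ m (x, t) ((1 : ℝ), (0 : ℝ))) x := by
    intro x
    have hcomp : ∀ i : Fin n, HasDerivAt (fun x => w (x, t) i * m (x, t) i)
        (fderiv ℝ w (x, t) ((1 : ℝ), (0 : ℝ)) i * m (x, t) i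
          + w (x, t) i * fderiv ℝ m (x, t) ((1 : ℝ), (0 : ℝ)) i) x := by
      intro i
      have h1 : HasDerivAt (fun x => w (x, t) i)
          (fderiv ℝ w (x, t) ((1 : ℝ), (0 : ℝ)) i) x :=
        (ContinuousLinearMap.proj (R := ℝ) (φ := fun _ : Fin n => ℝ)
          i).hasFDerivAt.comp_hasDerivAt x (hWx x)
      have h2 : HasDerivAt (fun x => m (x, t) i)
          (fderiv ℝ m (x, t) ((1 : ℝ), (0 : ℝ)) i) x :=
        (ContinuousLinearMap.proj (R := ℝ) (φ := fun _ : Fin n => ℝ)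
          i).hasFDerivAt.comp_hasDerivAt x (hmx x)
      exact h1.mul h2
    have hsum := HasDerivAt.sum (fun i (_ : i ∈ Finset.univ) => hcomp i)
    simp only [dotProduct]
    convert hsum using 1
    · rfl
    · rfl
    · ext y; simp [Finset.sum_apply]
    rw [Finset.sum_add_distrib]
  -- pointwise PDE computation
  have hpoint : ∀ p : ℝ × ℝ,
      fderiv ℝ (fun q => h (u q)) p ((0 : ℝ), (1 : ℝ))
        = -(w p ⬝ᵥ fderiv ℝ m p ((1 : ℝ), (0 : ℝ)))
          - fderiv ℝ (fun q => g (u q)) p ((1 : ℝ), (0 : ℝ)) := by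
    intro p
    have hcu : fderiv ℝ (fun q => h (u q)) p
        = (fderiv ℝ h (u p)).comp (fderiv ℝ u p) :=
      fderiv_comp p (hhd (u p)) (hud p)
    have hfu : fderiv ℝ (fun q => f (u q)) p
        = (fderiv ℝ f (u p)).comp (fderiv ℝ u p) :=
      fderiv_comp p (hfd (u p)) (hud p)
    have hguc : fderiv ℝ (fun q => g (u q)) p
        = (fderiv ℝ g (u p)).comp (fderiv ℝ u p) :=
      fderiv_comp p (hgd (u p)) (hud p)
    have hpde' : fderiv ℝ u p ((0 : ℝ), (1 : ℝ))
        = fderiv ℝ m p ((1 : ℝ), (0 : ℝ))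
          - fderiv ℝ (fun q => f (u q)) p ((1 : ℝ), (0 : ℝ)) :=
      eq_sub_of_add_eq (hpde p)
    calc fderiv ℝ (fun q => h (u q)) p ((0 : ℝ), (1 : ℝ))
        = fderiv ℝ h (u p) (fderiv ℝ u p ((0 : ℝ), (1 : ℝ))) := by
          rw [hcu]; rfl
      _ = fderiv ℝ h (u p) (fderiv ℝ m p ((1 : ℝ), (0 : ℝ)))
            - fderiv ℝ h (u p) (fderiv ℝ (fun q => f (u q)) p ((1 : ℝ), (0 : ℝ))) := by
          rw [hpde', map_sub]
      _ = -(w p ⬝ᵥ fderiv ℝ m p ((1 : ℝ), (0 : ℝ)))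
            - fderiv ℝ (fun q => g (u q)) p ((1 : ℝ), (0 : ℝ)) := by
          rw [hL]
          congr 1
          rw [hfu, hguc]
          simp only [ContinuousLinearMap.comp_apply]
          rw [hcompat (u p)]
          rfl
  -- the key FTC derivative identity for the boundary term
  have key : ∀ x : ℝ, HasDerivAt (fun x => g (u (x, t)) + w (x, t) ⬝ᵥ m (x, t))
      (fderiv ℝ w (x, t) ((1 : ℝ), (0 : ℝ)) ⬝ᵥ m (x, t)
        - fderiv ℝ (fun q => h (u q)) (x, t) ((0 : ℝ), (1 : ℝ))) x := by
    intro x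
    have H := (hgux x).add (hdot x)
    convert H using 1
    · rfl
    · rfl
    · rfl
    rw [hpoint (x, t)]
    ring
  have hG'cont : Continuous (fun x : ℝ =>
      fderiv ℝ w (x, t) ((1 : ℝ), (0 : ℝ)) ⬝ᵥ m (x, t)
        - fderiv ℝ (fun q => h (u q)) (x, t) ((0 : ℝ), (1 : ℝ))) :=
    (hE_cont.comp hline).sub (hphi_cont.comp hline)
  have hFTC := intervalIntegral.integral_eq_sub_of_hasDerivAt
    (f := fun x => g (u (x, t)) + w (x, t) ⬝ᵥ m (x, t))
    (fun x _ => key x) ((hG'cont).intervalIntegrable a b)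
  -- differentiation under the integral sign
  obtain ⟨C, hC⟩ := (isCompact_uIcc.prod (isCompact_closedBall t 1)).exists_bound_of_continuousOn
    (f := fun p : ℝ × ℝ => fderiv ℝ (fun q => h (u q)) p ((0 : ℝ), (1 : ℝ)))
    hphi_cont.continuousOn
  have hderiv : HasDerivAt (fun s => ∫ x in a..b, h (u (x, s)))
      (∫ x in a..b, fderiv ℝ (fun q => h (u q)) (x, t) ((0 : ℝ), (1 : ℝ))) t := by
    refine (intervalIntegral.hasDerivAt_integral_of_dominated_loc_of_deriv_le
      (F := fun s x => h (u (x, s)))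
      (F' := fun s x => fderiv ℝ (fun q => h (u q)) (x, s) ((0 : ℝ), (1 : ℝ)))
      (bound := fun _ => C) (s := Metric.ball t 1) (Metric.ball_mem_nhds t one_pos) ?_ ?_ ?_ ?_ ?_ ?_).2
    · exact Filter.Eventually.of_forall fun s =>
        ((hhu.continuous.comp (continuous_id.prodMk continuous_const)).aestronglyMeasurable)
    · exact (hhu.continuous.comp (continuous_id.prodMk continuous_const)).intervalIntegrable a b
    · exact (hphi_cont.comp (continuous_id.prodMk continuous_const)).aestronglyMeasurable
    · refine Filter.Eventually.of_forall fun x hx => fun s hs => ?_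
      exact hC (x, s) ⟨Set.uIoc_subset_uIcc hx, Metric.ball_subset_closedBall hs⟩
    · exact intervalIntegrable_const
    · refine Filter.Eventually.of_forall fun x _ => fun s _ => ?_
      exact ((hhu.differentiable two_ne_zero (x, s)).hasFDerivAt).comp_hasDerivAt s
        ((hasDerivAt_const s x).prodMk (hasDerivAt_id s))
  rw [hderiv.deriv]
  -- put everything together
  have hint1 : IntervalIntegrable
      (fun x => fderiv ℝ w (x, t) ((1 : ℝ), (0 : ℝ)) ⬝ᵥ m (x, t)) volume a b :=
    (hE_cont.comp hline).intervalIntegrable a b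
  have hint2 : IntervalIntegrable
      (fun x => fderiv ℝ (fun q => h (u q)) (x, t) ((0 : ℝ), (1 : ℝ))) volume a b :=
    (hphi_cont.comp hline).intervalIntegrable a b
  rw [intervalIntegral.integral_sub hint1 hint2] at hFTC
  have hgoal : (∫ x in a..b,
      (fderiv ℝ w (x, t) ((1 : ℝ), (0 : ℝ))) ⬝ᵥ
        (D (w (x, t))).mulVec (fderiv ℝ w (x, t) ((1 : ℝ), (0 : ℝ))))
      = ∫ x in a..b, fderiv ℝ w (x, t) ((1 : ℝ), (0 : ℝ)) ⬝ᵥ m (x, t) := rfl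
  rw [hgoal]
  have hb : (w (b, t)) ⬝ᵥ (D (w (b, t))).mulVec (fderiv ℝ w (b, t) ((1 : ℝ), (0 : ℝ)))
      = w (b, t) ⬝ᵥ m (b, t) := rfl
  have ha : (w (a, t)) ⬝ᵥ (D (w (a, t))).mulVec (fderiv ℝ w (a, t) ((1 : ℝ), (0 : ℝ)))
      = w (a, t) ⬝ᵥ m (a, t) := rfl
  rw [hb, ha]
  beta_reduce at hFTC
  linarith [hFTC]
end

section
/- Let P, Q, D be constant real n×n matrices with P and Q symmetric. Let v : ℝ × ℝ → ℝⁿ, (x,t) ↦ v(x,t), be twice continuously differentiable and satisfy the constant-coefficient dissipative system P·∂v/∂t + Q·∂v/∂x = D·∂²v/∂x² at every point. Then for every interval [a,b] and every t: d/dt ∫ₐᵇ v(x,t)ᵀ·P·v(x,t) dx + [ vᵀ·Q·v − 2 vᵀ·D·∂v/∂x ]ₓ₌ₐ^{x=b} = −2 ∫ₐᵇ (∂v/∂x)ᵀ·D·(∂v/∂x) dx. -/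
open Matrix MeasureTheory

lemma hasDerivAt_dot_mulVec {n : ℕ} (M : Matrix (Fin n) (Fin n) ℝ)
    {f g : ℝ → Fin n → ℝ} {f' g' : Fin n → ℝ} {s : ℝ}
    (hf : HasDerivAt f f' s) (hg : HasDerivAt g g' s) :
    HasDerivAt (fun s => f s ⬝ᵥ M.mulVec (g s))
      (f' ⬝ᵥ M.mulVec (g s) + f s ⬝ᵥ M.mulVec g') s := by
  have hfi : ∀ i, HasDerivAt (fun s => f s i) (f' i) s := hasDerivAt_pi.mp hf
  have hgi : ∀ i, HasDerivAt (fun s => g s i) (g' i) s := hasDerivAt_pi.mp hg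
  have key : ∀ i : Fin n, HasDerivAt (fun s => f s i * ∑ j, M i j * g s j)
      (f' i * ∑ j, M i j * g s j + f s i * ∑ j, M i j * g' j) s := by
    intro i
    exact (hfi i).mul (HasDerivAt.fun_sum fun j _ => (hgi j).const_mul (M i j))
  have := HasDerivAt.fun_sum (fun i (_ : i ∈ Finset.univ) => key i)
  simpa [dotProduct, Matrix.mulVec, Finset.sum_add_distrib] using this

lemma symm_dot_mulVec {n : ℕ} {M : Matrix (Fin n) (Fin n) ℝ} (hM : M.IsSymm)
    (x y : Fin n → ℝ) : x ⬝ᵥ M.mulVec y = y ⬝ᵥ M.mulVec x := by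
  rw [Matrix.dotProduct_mulVec, ← Matrix.mulVec_transpose, hM.eq, dotProduct_comm]

lemma hasDerivAt_line_x {E : Type*} [NormedAddCommGroup E] [NormedSpace ℝ E]
    {f : ℝ × ℝ → E} (hf : Differentiable ℝ f) (x t : ℝ) :
    HasDerivAt (fun x => f (x, t)) (fderiv ℝ f (x, t) (1, 0)) x :=
  (hf (x, t)).hasFDerivAt.comp_hasDerivAt x ((hasDerivAt_id x).prodMk (hasDerivAt_const x t))

lemma hasDerivAt_line_t {E : Type*} [NormedAddCommGroup E] [NormedSpace ℝ E]
    {f : ℝ × ℝ → E} (hf : Differentiable ℝ f) (x t : ℝ) :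
    HasDerivAt (fun t => f (x, t)) (fderiv ℝ f (x, t) (0, 1)) t :=
  (hf (x, t)).hasFDerivAt.comp_hasDerivAt t ((hasDerivAt_const t x).prodMk (hasDerivAt_id t))

lemma continuous_dot_mulVec {α : Type*} [TopologicalSpace α] {n : ℕ}
    (M : Matrix (Fin n) (Fin n) ℝ) {f g : α → Fin n → ℝ}
    (hf : Continuous f) (hg : Continuous g) :
    Continuous (fun p => f p ⬝ᵥ M.mulVec (g p)) := by
  simp only [dotProduct, Matrix.mulVec]
  exact continuous_finset_sum _ fun i _ => ((continuous_apply i).comp hf).mul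
    (continuous_finset_sum _ fun j _ =>
      (continuous_const.mul ((continuous_apply j).comp hg)))

/-- Energy identity for the linearized dissipative system: if `P, Q` are constant real
symmetric matrices, `D` a constant real matrix, and the `C²` function `v(x,t)` satisfies
`P ∂v/∂t + Q ∂v/∂x = D ∂²v/∂x²` pointwise, then for every interval `[a,b]` and every `t`,
`d/dt ∫ₐᵇ vᵀPv dx + [vᵀQv - 2 vᵀ D ∂v/∂x]ₐᵇ = -2 ∫ₐᵇ (∂v/∂x)ᵀ D (∂v/∂x) dx`. -/
theorem linear_dissipative_energy_identity
    (n : ℕ) (P Q D : Matrix (Fin n) (Fin n) ℝ)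
    (hPsymm : P.IsSymm) (hQsymm : Q.IsSymm)
    (v : ℝ × ℝ → (Fin n → ℝ)) (hv : ContDiff ℝ 2 v)
    (hpde : ∀ p : ℝ × ℝ,
      P.mulVec (fderiv ℝ v p ((0 : ℝ), (1 : ℝ)))
        + Q.mulVec (fderiv ℝ v p ((1 : ℝ), (0 : ℝ)))
      = D.mulVec (fderiv ℝ (fun q => fderiv ℝ v q ((1 : ℝ), (0 : ℝ))) p ((1 : ℝ), (0 : ℝ)))) :
    ∀ (a b : ℝ), a ≤ b → ∀ t : ℝ,
      deriv (fun s => ∫ x in a..b, (v (x, s)) ⬝ᵥ P.mulVec (v (x, s))) t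
        + (((v (b, t)) ⬝ᵥ Q.mulVec (v (b, t))
              - 2 * ((v (b, t)) ⬝ᵥ D.mulVec (fderiv ℝ v (b, t) ((1 : ℝ), (0 : ℝ)))))
          - ((v (a, t)) ⬝ᵥ Q.mulVec (v (a, t))
              - 2 * ((v (a, t)) ⬝ᵥ D.mulVec (fderiv ℝ v (a, t) ((1 : ℝ), (0 : ℝ))))))
      = -2 * ∫ x in a..b,
          (fderiv ℝ v (x, t) ((1 : ℝ), (0 : ℝ))) ⬝ᵥ
            D.mulVec (fderiv ℝ v (x, t) ((1 : ℝ), (0 : ℝ))) := by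
  intro a b hab t
  have hvd : Differentiable ℝ v := hv.differentiable (by norm_num)
  have hvc : Continuous v := hvd.continuous
  have hfd1 : ContDiff ℝ 1 (fderiv ℝ v) := hv.fderiv_right (by norm_num)
  have hu1 : ContDiff ℝ 1 (fun p => fderiv ℝ v p ((1:ℝ),(0:ℝ))) :=
    ((ContinuousLinearMap.apply ℝ (Fin n → ℝ) ((1:ℝ),(0:ℝ))).contDiff).comp hfd1
  have hud : Differentiable ℝ (fun p => fderiv ℝ v p ((1:ℝ),(0:ℝ))) :=
    hu1.differentiable (by norm_num)
  have huc : Continuous (fun p => fderiv ℝ v p ((1:ℝ),(0:ℝ))) := hud.continuous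
  have hwc : Continuous (fun p => fderiv ℝ v p ((0:ℝ),(1:ℝ))) :=
    (((ContinuousLinearMap.apply ℝ (Fin n → ℝ) ((0:ℝ),(1:ℝ))).contDiff).comp hfd1).continuous
  have hzc : Continuous
      (fun p => fderiv ℝ (fun q => fderiv ℝ v q ((1:ℝ),(0:ℝ))) p ((1:ℝ),(0:ℝ))) := by
    have h2 : ContDiff ℝ 0 (fderiv ℝ (fun q => fderiv ℝ v q ((1:ℝ),(0:ℝ)))) :=
      hu1.fderiv_right (by norm_num)
    exact ((ContinuousLinearMap.apply ℝ (Fin n → ℝ) ((1:ℝ),(0:ℝ))).continuous).comp h2.continuous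
  -- time derivative of the energy density
  have heA : ∀ x s : ℝ, HasDerivAt (fun s => v (x,s) ⬝ᵥ P.mulVec (v (x,s)))
      (2 * (v (x,s) ⬝ᵥ P.mulVec (fderiv ℝ v (x,s) ((0:ℝ),(1:ℝ))))) s := by
    intro x s
    have h := hasDerivAt_dot_mulVec P (hasDerivAt_line_t hvd x s) (hasDerivAt_line_t hvd x s)
    convert h using 1
    rw [symm_dot_mulVec hPsymm]; ring
  -- space derivative of the flux
  have hFxA : ∀ x : ℝ, HasDerivAt
      (fun x => v (x,t) ⬝ᵥ Q.mulVec (v (x,t))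
        - 2 * (v (x,t) ⬝ᵥ D.mulVec (fderiv ℝ v (x,t) ((1:ℝ),(0:ℝ)))))
      (2 * (v (x,t) ⬝ᵥ Q.mulVec (fderiv ℝ v (x,t) ((1:ℝ),(0:ℝ))))
        - 2 * (fderiv ℝ v (x,t) ((1:ℝ),(0:ℝ)) ⬝ᵥ D.mulVec (fderiv ℝ v (x,t) ((1:ℝ),(0:ℝ))))
        - 2 * (v (x,t) ⬝ᵥ D.mulVec
            (fderiv ℝ (fun q => fderiv ℝ v q ((1:ℝ),(0:ℝ))) (x,t) ((1:ℝ),(0:ℝ))))) x := by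
    intro x
    have h1 := hasDerivAt_dot_mulVec Q (hasDerivAt_line_x hvd x t) (hasDerivAt_line_x hvd x t)
    have h2 := hasDerivAt_dot_mulVec D (hasDerivAt_line_x hvd x t) (hasDerivAt_line_x hud x t)
    have h := h1.sub (h2.const_mul 2)
    refine h.congr_deriv ?_
    rw [symm_dot_mulVec hQsymm]; ring
  -- pointwise energy balance
  have hpoint : ∀ p : ℝ × ℝ,
      2 * (v p ⬝ᵥ P.mulVec (fderiv ℝ v p ((0:ℝ),(1:ℝ))))
      = -2 * (fderiv ℝ v p ((1:ℝ),(0:ℝ)) ⬝ᵥ D.mulVec (fderiv ℝ v p ((1:ℝ),(0:ℝ))))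
        - (2 * (v p ⬝ᵥ Q.mulVec (fderiv ℝ v p ((1:ℝ),(0:ℝ))))
          - 2 * (fderiv ℝ v p ((1:ℝ),(0:ℝ)) ⬝ᵥ D.mulVec (fderiv ℝ v p ((1:ℝ),(0:ℝ))))
          - 2 * (v p ⬝ᵥ D.mulVec
              (fderiv ℝ (fun q => fderiv ℝ v q ((1:ℝ),(0:ℝ))) p ((1:ℝ),(0:ℝ))))) := by
    intro p
    have h := congrArg (fun y => v p ⬝ᵥ y) (hpde p)
    simp only [dotProduct_add] at h
    linarith
  -- continuity facts
  have hgc : Continuous (fun p : ℝ × ℝ =>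
      2 * (v p ⬝ᵥ P.mulVec (fderiv ℝ v p ((0:ℝ),(1:ℝ))))) :=
    continuous_const.mul (continuous_dot_mulVec P hvc hwc)
  have hline : ∀ s : ℝ, Continuous (fun x : ℝ => ((x, s) : ℝ × ℝ)) :=
    fun s => continuous_id.prodMk continuous_const
  have hqc : Continuous (fun x : ℝ =>
      fderiv ℝ v (x,t) ((1:ℝ),(0:ℝ)) ⬝ᵥ D.mulVec (fderiv ℝ v (x,t) ((1:ℝ),(0:ℝ)))) :=
    (continuous_dot_mulVec D huc huc).comp (hline t)
  have hFxc : Continuous (fun x : ℝ =>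
      2 * (v (x,t) ⬝ᵥ Q.mulVec (fderiv ℝ v (x,t) ((1:ℝ),(0:ℝ))))
        - 2 * (fderiv ℝ v (x,t) ((1:ℝ),(0:ℝ)) ⬝ᵥ D.mulVec (fderiv ℝ v (x,t) ((1:ℝ),(0:ℝ))))
        - 2 * (v (x,t) ⬝ᵥ D.mulVec
            (fderiv ℝ (fun q => fderiv ℝ v q ((1:ℝ),(0:ℝ))) (x,t) ((1:ℝ),(0:ℝ))))) := by
    refine Continuous.sub (Continuous.sub ?_ ?_) ?_
    · exact (continuous_const.mul ((continuous_dot_mulVec Q hvc huc).comp (hline t)))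
    · exact continuous_const.mul hqc
    · exact (continuous_const.mul ((continuous_dot_mulVec D hvc hzc).comp (hline t)))
  -- FTC for the flux term
  have hFTC : (∫ x in a..b,
      (2 * (v (x,t) ⬝ᵥ Q.mulVec (fderiv ℝ v (x,t) ((1:ℝ),(0:ℝ))))
        - 2 * (fderiv ℝ v (x,t) ((1:ℝ),(0:ℝ)) ⬝ᵥ D.mulVec (fderiv ℝ v (x,t) ((1:ℝ),(0:ℝ))))
        - 2 * (v (x,t) ⬝ᵥ D.mulVec
            (fderiv ℝ (fun q => fderiv ℝ v q ((1:ℝ),(0:ℝ))) (x,t) ((1:ℝ),(0:ℝ))))))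
      = (v (b,t) ⬝ᵥ Q.mulVec (v (b,t))
          - 2 * (v (b,t) ⬝ᵥ D.mulVec (fderiv ℝ v (b,t) ((1:ℝ),(0:ℝ)))))
        - (v (a,t) ⬝ᵥ Q.mulVec (v (a,t))
          - 2 * (v (a,t) ⬝ᵥ D.mulVec (fderiv ℝ v (a,t) ((1:ℝ),(0:ℝ))))) :=
    intervalIntegral.integral_eq_sub_of_hasDerivAt (fun x _ => hFxA x)
      (hFxc.intervalIntegrable a b)
  -- differentiation under the integral sign
  obtain ⟨C, hC⟩ := (isCompact_uIcc.prod (isCompact_closedBall t 1)).exists_bound_of_continuousOn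
    hgc.continuousOn
  have hMain := (intervalIntegral.hasDerivAt_integral_of_dominated_loc_of_deriv_le
      (F := fun s x => v (x,s) ⬝ᵥ P.mulVec (v (x,s)))
      (F' := fun s x => 2 * (v (x,s) ⬝ᵥ P.mulVec (fderiv ℝ v (x,s) ((0:ℝ),(1:ℝ)))))
      (x₀ := t) (bound := fun _ => C) (μ := volume) (Metric.ball_mem_nhds t one_pos)
      (Filter.Eventually.of_forall fun s =>
        ((continuous_dot_mulVec P hvc hvc).comp (hline s)).aestronglyMeasurable)
      (((continuous_dot_mulVec P hvc hvc).comp (hline t)).intervalIntegrable a b)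
      ((hgc.comp (hline t)).aestronglyMeasurable)
      (Filter.Eventually.of_forall fun x hx => fun s hs => by
        have : ((x, s) : ℝ × ℝ) ∈ Set.uIcc a b ×ˢ Metric.closedBall t 1 :=
          ⟨Set.Ioc_subset_Icc_self hx, Metric.ball_subset_closedBall hs⟩
        exact hC _ this)
      (intervalIntegrable_const)
      (Filter.Eventually.of_forall fun x hx => fun s hs => heA x s)).2
  rw [hMain.deriv]
  -- split the integral of the time derivative
  have hsplit : (∫ x in a..b, 2 * (v (x,t) ⬝ᵥ P.mulVec (fderiv ℝ v (x,t) ((0:ℝ),(1:ℝ)))))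
      = -2 * (∫ x in a..b,
            fderiv ℝ v (x,t) ((1:ℝ),(0:ℝ)) ⬝ᵥ D.mulVec (fderiv ℝ v (x,t) ((1:ℝ),(0:ℝ))))
        - ∫ x in a..b,
            (2 * (v (x,t) ⬝ᵥ Q.mulVec (fderiv ℝ v (x,t) ((1:ℝ),(0:ℝ))))
              - 2 * (fderiv ℝ v (x,t) ((1:ℝ),(0:ℝ)) ⬝ᵥ D.mulVec (fderiv ℝ v (x,t) ((1:ℝ),(0:ℝ))))
              - 2 * (v (x,t) ⬝ᵥ D.mulVec
                  (fderiv ℝ (fun q => fderiv ℝ v q ((1:ℝ),(0:ℝ))) (x,t) ((1:ℝ),(0:ℝ))))) := by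
    rw [← intervalIntegral.integral_const_mul, ← intervalIntegral.integral_sub
      ((show Continuous fun x : ℝ => (-2:ℝ) *
        (fderiv ℝ v (x,t) ((1:ℝ),(0:ℝ)) ⬝ᵥ D.mulVec (fderiv ℝ v (x,t) ((1:ℝ),(0:ℝ)))) from continuous_const.mul hqc).intervalIntegrable a b) (hFxc.intervalIntegrable a b)]
    exact intervalIntegral.integral_congr fun x _ => hpoint (x, t)
  rw [hsplit, hFTC]
  ring
end

section
/- Let ρₗ, ρᵣ > 0, Bx, vxₗ, vxᵣ ∈ ℝ and Btₗ, Btᵣ, vtₗ, vtᵣ ∈ ℝ² satisfy the Rankine–Hugoniot relations ρₗ·vxₗ = ρᵣ·vxᵣ =: G ≠ 0, G·vtₗ − Bx·Btₗ = G·vtᵣ − Bx·Btᵣ, and vxₗ·Btₗ − Bx·vtₗ = vxᵣ·Btᵣ − Bx·vtᵣ. If in addition Bx² ≠ ρₗ·vxₗ² (i.e. the normal flow speed on the left is not equal to the left Alfvén speed), then the transverse field vectors are proportional: Btₗ = [(Bx² − ρᵣ·vxᵣ²)/(Bx² − ρₗ·vxₗ²)]·Btᵣ. In particular Btₗ and Btᵣ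 are linearly dependent vectors in ℝ², so the transverse magnetic field on one side of the discontinuity is parallel or anti-parallel to that on the other side. -/
/-!
Eliminating the jump of the transverse velocity between the momentum condition
`G (vtₗ - vtᵣ) = Bx (Btₗ - Btᵣ)` and the induction condition (multiplied by `G`) gives
`(Bx² - G vxₗ) Btₗ = (Bx² - G vxᵣ) Btᵣ`, and `G vx = ρ vx²` on each side.
-/

theorem smul_transverse_field_eq_of_rankineHugoniot {R M : Type*} [CommRing R]
    [AddCommGroup M] [Module R M] {G Bx vxl vxr : R} {Btl Btr vtl vtr : M}
    (hmom : G • vtl - Bx • Btl = G • vtr - Bx • Btr)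
    (hind : vxl • Btl - Bx • vtl = vxr • Btr - Bx • vtr) :
    (Bx ^ 2 - G * vxl) • Btl = (Bx ^ 2 - G * vxr) • Btr := by
  linear_combination (norm := module) -(G • hind) - Bx • hmom

theorem not_linearIndependent_pair_of_eq_smul {R M : Type*} [Ring R] [Nontrivial R]
    [AddCommGroup M] [Module R M] {x y : M} (c : R) (h : x = c • y) :
    ¬ LinearIndependent R ![x, y] := by
  intro hxy
  have hcoeffs := LinearIndependent.pair_iff.mp hxy 1 (-c) (by
    rw [h, one_smul, neg_smul, add_neg_cancel])
  exact one_ne_zero hcoeffs.1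

theorem mhd_transverse_fields_parallel_general
    (ρl ρr vxl vxr Bx G : ℝ)
    (Btl Btr vtl vtr : Fin 2 → ℝ)
    (hGl : G = ρl * vxl) (hGr : G = ρr * vxr)
    (hmom : G • vtl - Bx • Btl = G • vtr - Bx • Btr)
    (hind : vxl • Btl - Bx • vtl = vxr • Btr - Bx • vtr)
    (hna : Bx ^ 2 ≠ ρl * vxl ^ 2) :
    Btl = ((Bx ^ 2 - ρr * vxr ^ 2) / (Bx ^ 2 - ρl * vxl ^ 2)) • Btr ∧
    ¬ LinearIndependent ℝ ![Btl, Btr] := by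
  have hjump := smul_transverse_field_eq_of_rankineHugoniot hmom hind
  have hl : G * vxl = ρl * vxl ^ 2 := by rw [hGl]; ring
  have hr : G * vxr = ρr * vxr ^ 2 := by rw [hGr]; ring
  rw [hl, hr] at hjump
  have hBt : Btl = ((Bx ^ 2 - ρr * vxr ^ 2) / (Bx ^ 2 - ρl * vxl ^ 2)) • Btr := by
    rwa [div_eq_inv_mul, mul_smul, eq_inv_smul_iff₀ (sub_ne_zero.mpr hna)]
  exact ⟨hBt, not_linearIndependent_pair_of_eq_smul _ hBt⟩

/-- Coplanarity of MHD discontinuities: under the Rankine–Hugoniot relations (continuity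
of the mass flux `G = ρ vx ≠ 0`, of the transverse momentum flux `G·vt - Bx·Bt`, and of
the transverse electric field `vx·Bt - Bx·vt`), if `Bx² ≠ ρₗ vxₗ²` then
`Btₗ = [(Bx² - ρᵣ vxᵣ²)/(Bx² - ρₗ vxₗ²)]·Btᵣ`; in particular `Btₗ` and `Btᵣ` are linearly
dependent, i.e. the transverse magnetic fields on the two sides are parallel or
anti-parallel. -/
theorem mhd_transverse_fields_parallel
    (ρl ρr vxl vxr Bx G : ℝ) (hρl : 0 < ρl) (hρr : 0 < ρr)
    (Btl Btr vtl vtr : Fin 2 → ℝ)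
    (hGl : G = ρl * vxl) (hGr : G = ρr * vxr) (hG : G ≠ 0)
    (hmom : G • vtl - Bx • Btl = G • vtr - Bx • Btr)
    (hind : vxl • Btl - Bx • vtl = vxr • Btr - Bx • vtr)
    (hna : Bx ^ 2 ≠ ρl * vxl ^ 2) :
    Btl = ((Bx ^ 2 - ρr * vxr ^ 2) / (Bx ^ 2 - ρl * vxl ^ 2)) • Btr ∧
    ¬ LinearIndependent ℝ ![Btl, Btr] :=
  mhd_transverse_fields_parallel_general ρl ρr vxl vxr Bx G Btl Btr vtl vtr hGl hGr hmom hind hna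
end
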